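/- arXiv:math/9802085 — 4 statements merged into one kernel-verified Lean document; each statement's English description precedes it below -/
import Mathlib

section
/- Let ν ⊆ λ be partitions. Then Σ_{μ : ν ⊆ μ ⊆ λ} (−1)^{|λ|−|μ|} f^{μ}_{ν(1^{|μ|−|ν|})} g^{λ}_{μ(|λ|−|μ|)} = δ_{λν}, where f^{μ}_{ν(1^k)} = Π_{i≥1} [μ'_i − μ'_{i+1} ; μ'_i − ν'_i] and g^{λ}_{μ(m)} = q^{Σ_{i≥1} binom(λ'_i − μ'_i, 2)} Π_{i≥1} [λ'_i − μ'_{i+1} ; μ'_i − μ'_{i+1}]; here δ_{λν} = 1 if λ = ν and 0 otherwise. -/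
/-! Write `b = ν'`, `c = λ'` and `A = μ'` for the column heights. The summand is a product over
the columns `i` of a factor that depends on `A i` and `A (i + 1)` only and vanishes unless
`A (i + 1) ≤ b i ≤ A i ≤ c i`; so the sum may be taken over all sequences `A ≤ c`, and the
first column can be summed out with the others fixed. The q-trinomial identity
`[A₀ - A₁; A₀ - b₀] [c₀ - A₁; A₀ - A₁] = [c₀ - A₁; b₀ - A₁] [c₀ - b₀; c₀ - A₀]`
turns that sum into `[c₀ - A₁; b₀ - A₁]` times
`∑_t (-1)^t q^{binom(t, 2)} [c₀ - b₀; t] = δ_{b₀ c₀}`,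
and induction on the number of columns finishes the proof. -/

open scoped BigOperators Classical

namespace HKKOTY

/-! ### q-binomial coefficients -/

/-- Gaussian binomial coefficient `[m; k]_q`, via the q-Pascal recurrence. -/
def qbin {R : Type*} [CommRing R] (q : R) : ℕ → ℕ → R
  | _, 0 => 1
  | 0, _ + 1 => 0
  | m + 1, k + 1 => qbin q m k + q ^ (k + 1) * qbin q m (k + 1)

/-- `[m; k]_q` for integer arguments, zero unless `0 ≤ k ≤ m`. -/
def qbinZ {R : Type*} [CommRing R] (q : R) (m k : ℤ) : R :=
  if 0 ≤ m ∧ 0 ≤ k then qbin q m.toNat k.toNat else 0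

/-- `[m; k]_q` for rational arguments, zero unless both are integers with `0 ≤ k ≤ m`. -/
def qbinQ {R : Type*} [CommRing R] (q : R) (m k : ℚ) : R :=
  if m.den = 1 ∧ k.den = 1 then qbinZ q m.num k.num else 0

/-! ### Partitions as sorted lists of positive integers -/

/-- A partition, encoded as a weakly decreasing list of positive integers. -/
def IsPtn (μ : List ℕ) : Prop :=
  List.Pairwise (· ≥ ·) μ ∧ ∀ x ∈ μ, 0 < x

/-- `conjL μ i` is the `(i+1)`-st part `μ'_{i+1}` of the conjugate partition. -/
def conjL (μ : List ℕ) (i : ℕ) : ℕ := (μ.filter (fun x => i + 1 ≤ x)).length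

/-- The conjugate partition, as a list. -/
def conjList (μ : List ℕ) : List ℕ := (List.range (μ.getD 0 0)).map (fun i => conjL μ i)

/-- Content composition attached to a partition `μ`:
the letter `k ≥ 1` occurs `μ_k` times. -/
def toC (μ : List ℕ) : ℕ → ℕ := fun k => μ.getD (k - 1) 0

/-- Partwise sum of two partitions (padding with zeros). -/
def addL (α β : List ℕ) : List ℕ :=
  (List.range (max α.length β.length)).map (fun i => α.getD i 0 + β.getD i 0)

end HKKOTY


namespace HKKOTY

open Finset

/-- The Pieri coefficient `f^{μ}_{ν(1^k)} = ∏_i [μ'_i - μ'_{i+1}; μ'_i - ν'_i]`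
(for multiplication of a Hall–Littlewood function by `e_k`). -/
noncomputable def fPieriP (bound : ℕ) (μ ν : List ℕ) : Polynomial ℤ :=
  ∏ i ∈ range bound,
    qbinZ (Polynomial.X : Polynomial ℤ)
      ((conjL μ i : ℤ) - (conjL μ (i + 1) : ℤ))
      ((conjL μ i : ℤ) - (conjL ν i : ℤ))

/-- The Pieri coefficient
`g^{λ}_{μ(m)} = q^{∑_i binom(λ'_i - μ'_i, 2)} ∏_i [λ'_i - μ'_{i+1}; μ'_i - μ'_{i+1}]`
(for multiplication of a Hall–Littlewood function by `h_m`). -/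
noncomputable def gPieriP (bound : ℕ) (lam μ : List ℕ) : Polynomial ℤ :=
  Polynomial.X ^ (∑ i ∈ range bound, (conjL lam i - conjL μ i).choose 2) *
    ∏ i ∈ range bound,
      qbinZ (Polynomial.X : Polynomial ℤ)
        ((conjL lam i : ℤ) - (conjL μ (i + 1) : ℤ))
        ((conjL μ i : ℤ) - (conjL μ (i + 1) : ℤ))

open Polynomial

section QBinomial

variable {R : Type*} [CommRing R] (q : R)

@[simp] lemma qbin_zero_right (m : ℕ) : qbin q m 0 = 1 := by cases m <;> rfl

lemma qbin_succ_succ (m k : ℕ) :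
    qbin q (m + 1) (k + 1) = qbin q m k + q ^ (k + 1) * qbin q m (k + 1) := rfl

lemma qbin_eq_zero_of_lt : ∀ {m k : ℕ}, m < k → qbin q m k = 0
  | 0, _ + 1, _ => rfl
  | m + 1, k + 1, h => by
    rw [qbin_succ_succ, qbin_eq_zero_of_lt (by omega), qbin_eq_zero_of_lt (by omega)]
    ring

@[simp] lemma qbin_self : ∀ m : ℕ, qbin q m m = 1
  | 0 => rfl
  | m + 1 => by rw [qbin_succ_succ, qbin_self m, qbin_eq_zero_of_lt q (by omega)]; ring

def qpoch (m : ℕ) : R := ∏ i ∈ range m, (1 - q ^ (i + 1))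

@[simp] lemma qpoch_zero : qpoch q 0 = 1 := rfl

lemma qpoch_succ (m : ℕ) : qpoch q (m + 1) = qpoch q m * (1 - q ^ (m + 1)) :=
  prod_range_succ _ _

lemma qbin_mul_qpoch_mul_qpoch : ∀ {m k : ℕ}, k ≤ m →
    qbin q m k * (qpoch q k * qpoch q (m - k)) = qpoch q m
  | m, 0, _ => by simp
  | 0, _ + 1, h => by omega
  | m + 1, k + 1, h => by
    obtain rfl | hkm := eq_or_lt_of_le (Nat.le_of_succ_le_succ h)
    · simp
    obtain ⟨j, rfl⟩ := Nat.exists_eq_add_of_lt hkm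
    have ih₁ := qbin_mul_qpoch_mul_qpoch (m := k + j + 1) (k := k) (by omega)
    have ih₂ := qbin_mul_qpoch_mul_qpoch (m := k + j + 1) (k := k + 1) (by omega)
    rw [show k + j + 1 - k = j + 1 by omega] at ih₁
    rw [show k + j + 1 - (k + 1) = j by omega] at ih₂
    rw [show k + j + 1 + 1 - (k + 1) = j + 1 by omega, qbin_succ_succ]
    rw [qpoch_succ q k, qpoch_succ q j, qpoch_succ q (k + j + 1)] at *
    linear_combination (1 - q ^ (k + 1)) * ih₁ + q ^ (k + 1) * (1 - q ^ (j + 1)) * ih₂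

lemma alternating_sum_qbin (m : ℕ) :
    ∑ t ∈ range (m + 1), (-1 : R) ^ t * q ^ t.choose 2 * qbin q m t =
      if m = 0 then 1 else 0 := by
  cases m with
  | zero => simp
  | succ m =>
    -- Pascal's rule makes the sum telescope.
    set G : ℕ → R := fun t => (-1 : R) ^ t * q ^ (t + 1).choose 2 * qbin q m t
    have telescope : ∀ t ∈ range (m + 1),
        (-1 : R) ^ (t + 1) * q ^ (t + 1).choose 2 * qbin q (m + 1) (t + 1) =
          G (t + 1) - G t := by
      intro t _
      simp only [G, qbin_succ_succ, Nat.choose_succ_succ' (t + 1) 1, Nat.choose_one_right,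
        pow_add, pow_succ]
      ring
    rw [sum_range_succ', sum_congr rfl telescope, sum_range_sub G]
    simp [G, qbin_eq_zero_of_lt q (Nat.lt_succ_self m)]

lemma qbinZ_natCast (m k : ℕ) : qbinZ q m k = qbin q m k := by
  simp [qbinZ]

lemma qbinZ_natCast_sub {x y v w : ℕ} (hyx : y ≤ x) (hwv : w ≤ v) :
    qbinZ q ((x : ℤ) - y) ((v : ℤ) - w) = qbin q (x - y) (v - w) := by
  rw [← Nat.cast_sub hyx, ← Nat.cast_sub hwv, qbinZ_natCast]

lemma le_of_qbinZ_ne_zero {m k : ℤ} (h : qbinZ q m k ≠ 0) : 0 ≤ k ∧ k ≤ m := by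
  unfold qbinZ at h
  split_ifs at h with hmk
  · refine ⟨hmk.2, not_lt.1 fun hlt => h (qbin_eq_zero_of_lt q ?_)⟩
    omega
  · exact absurd rfl h

end QBinomial

section QBinomialX

variable {R : Type*} [CommRing R] [IsDomain R]

lemma qpoch_X_ne_zero (m : ℕ) : qpoch (X : R[X]) m ≠ 0 := fun h => by
  simpa [qpoch, eval_prod] using congrArg (eval 0) h

lemma qbin_X_symm {m k : ℕ} (h : k ≤ m) : qbin (X : R[X]) m k = qbin X m (m - k) := by
  have e := qbin_mul_qpoch_mul_qpoch (X : R[X]) (Nat.sub_le m k)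
  rw [Nat.sub_sub_self h, mul_comm (qpoch _ _)] at e
  exact mul_right_cancel₀ (mul_ne_zero (qpoch_X_ne_zero k) (qpoch_X_ne_zero (m - k)))
    ((qbin_mul_qpoch_mul_qpoch X h).trans e.symm)

lemma qbin_X_mul_qbin_X {m k j : ℕ} (hjk : j ≤ k) (hkm : k ≤ m) :
    qbin (X : R[X]) m k * qbin X k j = qbin X m j * qbin X (m - j) (k - j) := by
  have e₁ := qbin_mul_qpoch_mul_qpoch (X : R[X]) hkm
  have e₂ := qbin_mul_qpoch_mul_qpoch (X : R[X]) hjk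
  have e₃ := qbin_mul_qpoch_mul_qpoch (X : R[X]) (j.le_trans hjk hkm)
  have e₄ := qbin_mul_qpoch_mul_qpoch (X : R[X]) (Nat.sub_le_sub_right hkm j)
  rw [Nat.sub_sub_sub_cancel_right hjk] at e₄
  refine mul_right_cancel₀ (mul_ne_zero (mul_ne_zero (qpoch_X_ne_zero j)
    (qpoch_X_ne_zero (k - j))) (qpoch_X_ne_zero (m - k))) ?_
  linear_combination qbin X m k * qpoch X (m - k) * e₂ + e₁ - e₃ - qbin X m j * qpoch X j * e₄

end QBinomialX

section ColumnSum

/-- The factor of column `i` in the Pieri product, with `c = λ'_i`, `b = ν'_i`, `a = μ'_i` and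
`a' = μ'_{i+1}`. -/
noncomputable def colWeight (c b a a' : ℕ) : ℤ[X] :=
  (-1) ^ (c - a) * X ^ (c - a).choose 2 *
    (qbinZ X ((a : ℤ) - a') ((a : ℤ) - b) * qbinZ X ((c : ℤ) - a') ((a : ℤ) - a'))

lemma le_of_colWeight_ne_zero {c b a a' : ℕ} (h : colWeight c b a a' ≠ 0) :
    a' ≤ b ∧ b ≤ a := by
  have := le_of_qbinZ_ne_zero _ (left_ne_zero_of_mul (right_ne_zero_of_mul h))
  omega

lemma colWeight_eq {c b a a' : ℕ} (ha'b : a' ≤ b) (hba : b ≤ a) (hac : a ≤ c) :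
    colWeight c b a a' =
      qbin X (c - a') (b - a') *
        ((-1) ^ (c - a) * X ^ (c - a).choose 2 * qbin X (c - b) (c - a)) := by
  have hprod : qbin (X : ℤ[X]) (a - a') (a - b) * qbin X (c - a') (a - a') =
      qbin X (c - a') (b - a') * qbin X (c - b) (c - a) := by
    rw [qbin_X_symm (by omega : a - b ≤ a - a'), show a - a' - (a - b) = b - a' by omega,
      mul_comm, qbin_X_mul_qbin_X (by omega) (by omega), show c - a' - (b - a') = c - b by omega,
      show a - a' - (b - a') = a - b by omega, qbin_X_symm (by omega : a - b ≤ c - b),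
      show c - b - (a - b) = c - a by omega]
  rw [colWeight, qbinZ_natCast_sub _ (by omega) (by omega),
    qbinZ_natCast_sub _ (by omega) (by omega), hprod]
  ring

theorem sum_colWeight (c b a' : ℕ) :
    ∑ a ∈ range (c + 1), colWeight c b a a' = if a' ≤ b ∧ b = c then 1 else 0 := by
  by_cases h : a' ≤ b ∧ b ≤ c
  · obtain ⟨ha'b, hbc⟩ := h
    calc ∑ a ∈ range (c + 1), colWeight c b a a'
        = ∑ t ∈ range (c + 1), colWeight c b (c - t) a' := by
          rw [← sum_range_reflect]; simp
      _ = ∑ t ∈ range (c - b + 1), colWeight c b (c - t) a' := by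
          refine (sum_subset (range_subset_range.2 (by omega)) fun t ht hnot => ?_).symm
          by_contra hw
          have := le_of_colWeight_ne_zero hw
          simp only [mem_range] at ht hnot
          omega
      _ = ∑ t ∈ range (c - b + 1),
            qbin X (c - a') (b - a') * ((-1) ^ t * X ^ t.choose 2 * qbin X (c - b) t) := by
          refine sum_congr rfl fun t ht => ?_
          simp only [mem_range] at ht
          rw [colWeight_eq ha'b (by omega) (by omega), Nat.sub_sub_self (by omega)]
      _ = if a' ≤ b ∧ b = c then 1 else 0 := by
          rw [← mul_sum, alternating_sum_qbin]
          by_cases hbc' : b = c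
          · subst hbc'
            simp [ha'b]
          · simp [hbc', show c - b ≠ 0 by omega]
  · rw [if_neg (by omega)]
    refine sum_eq_zero fun a ha => ?_
    by_contra hw
    have := le_of_colWeight_ne_zero hw
    simp only [mem_range] at ha
    omega

end ColumnSum

section ColumnSequences

def consSeq (a : ℕ) (A : ℕ → ℕ) : ℕ → ℕ
  | 0 => a
  | i + 1 => A i

lemma consSeq_injective : Function.Injective fun p : ℕ × (ℕ → ℕ) => consSeq p.1 p.2 :=
  fun _ _ h => Prod.ext (congrFun h 0) (funext fun i => congrFun h (i + 1))

noncomputable def colBox : ℕ → (ℕ → ℕ) → Finset (ℕ → ℕ)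
  | 0, _ => {0}
  | N + 1, c =>
    (range (c 0 + 1) ×ˢ colBox N fun i => c (i + 1)).image fun p => consSeq p.1 p.2

lemma mem_colBox {N : ℕ} {c A : ℕ → ℕ} :
    A ∈ colBox N c ↔ (∀ i, A i ≤ c i) ∧ ∀ i, N ≤ i → A i = 0 := by
  induction N generalizing c A with
  | zero =>
    simp only [colBox, mem_singleton, zero_le, forall_const, funext_iff, Pi.zero_apply]
    exact ⟨fun h => ⟨fun i => (h i).le.trans (Nat.zero_le _), h⟩, And.right⟩
  | succ N ih =>
    simp only [colBox, mem_image, mem_product, mem_range, ih, Prod.exists]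
    constructor
    · rintro ⟨a, A', ⟨ha, hA'c, hA'0⟩, rfl⟩
      refine ⟨fun i => ?_, fun i hi => ?_⟩
      · cases i with
        | zero => exact Nat.le_of_lt_succ ha
        | succ i => exact hA'c i
      · obtain ⟨i, rfl⟩ := Nat.exists_eq_add_of_le' (Nat.one_le_of_lt hi)
        exact hA'0 i (by omega)
    · rintro ⟨hAc, hA0⟩
      refine ⟨A 0, fun i => A (i + 1), ⟨Nat.lt_succ_of_le (hAc 0), fun i => hAc (i + 1),
        fun i hi => hA0 (i + 1) (by omega)⟩, funext fun i => ?_⟩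
      cases i <;> rfl

/-- The Pieri summand `(-1)^{|λ|-|μ|} f^μ_ν g^λ_μ` in terms of the column heights
`b = ν'`, `c = λ'` and `A = μ'`. -/
noncomputable def pieriWeight (N : ℕ) (b c A : ℕ → ℕ) : ℤ[X] :=
  ∏ i ∈ range N, colWeight (c i) (b i) (A i) (A (i + 1))

lemma pieriWeight_succ_consSeq (N a : ℕ) (b c A : ℕ → ℕ) :
    pieriWeight (N + 1) b c (consSeq a A) =
      colWeight (c 0) (b 0) a (A 0) *
        pieriWeight N (fun i => b (i + 1)) (fun i => c (i + 1)) A := by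
  rw [pieriWeight, prod_range_succ', mul_comm]
  rfl

lemma le_of_pieriWeight_ne_zero {N : ℕ} {b c A : ℕ → ℕ} (h : pieriWeight N b c A ≠ 0) {i : ℕ}
    (hi : i < N) : A (i + 1) ≤ b i ∧ b i ≤ A i :=
  le_of_colWeight_ne_zero (prod_ne_zero_iff.1 h i (mem_range.2 hi))

theorem sum_colBox_pieriWeight (N : ℕ) (b c : ℕ → ℕ) (hc : ∀ i, c (i + 1) ≤ c i) :
    ∑ A ∈ colBox N c, pieriWeight N b c A = if ∀ i < N, b i = c i then 1 else 0 := by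
  induction N generalizing b c with
  | zero => simp [colBox, pieriWeight]
  | succ N ih =>
    rw [colBox, sum_image fun p _ q _ h => consSeq_injective h, sum_product_right]
    simp only [pieriWeight_succ_consSeq, ← sum_mul, sum_colWeight, Nat.forall_lt_succ_left]
    by_cases hbc : b 0 = c 0
    · rw [if_congr (and_iff_right hbc) rfl rfl, ← ih _ _ fun i => hc (i + 1)]
      refine sum_congr rfl fun A hA => ?_
      have hA0 : A 0 ≤ b 0 := hbc ▸ ((mem_colBox.1 hA).1 0).trans (hc 0)
      rw [if_pos ⟨hA0, hbc⟩, one_mul]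
    · simp [hbc]

end ColumnSequences

section Partitions

lemma getD_antitone {μ : List ℕ} (h : μ.Pairwise (· ≥ ·)) : Antitone (μ.getD · 0) := by
  intro i j hij
  by_cases hj : j < μ.length
  · simp only [List.getD_eq_getElem _ _ hj, List.getD_eq_getElem _ _ (hij.trans_lt hj)]
    rcases hij.lt_or_eq with hij | rfl
    · exact List.pairwise_iff_getElem.1 h i j _ hj hij
    · rfl
  · simp only [List.getD_eq_default _ _ (not_lt.1 hj), Nat.zero_le]

lemma le_getD_zero_of_mem {μ : List ℕ} (h : μ.Pairwise (· ≥ ·)) {x : ℕ} (hx : x ∈ μ) :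
    x ≤ μ.getD 0 0 := by
  obtain ⟨j, hj, rfl⟩ := List.getElem_of_mem hx
  rw [← List.getD_eq_getElem _ 0 hj]
  exact getD_antitone h (Nat.zero_le j)

/-- The conjugate of an antitone sequence `A` vanishing from `N` on is
`j ↦ #{k < N | j < A k}`. -/
lemma lt_iff_lt_card_filter {N : ℕ} {A : ℕ → ℕ} (hA : Antitone A) (hN : ∀ i, N ≤ i → A i = 0)
    (i j : ℕ) : j < A i ↔ i < #{k ∈ range N | j < A k} := by
  constructor
  · intro h
    have hiN : i < N := not_le.1 fun hi => by simp [hN i hi] at h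
    calc i < #(range (i + 1)) := by simp
      _ ≤ #{k ∈ range N | j < A k} := card_le_card fun k hk => by
        simp only [mem_range, mem_filter] at hk ⊢
        exact ⟨by omega, h.trans_le (hA (by omega))⟩
  · intro h
    by_contra hAi
    have hsub : {k ∈ range N | j < A k} ⊆ range i := fun k hk => by
      simp only [mem_range, mem_filter] at hk ⊢
      exact not_le.1 fun hik => hAi (hk.2.trans_le (hA hik))
    have := card_le_card hsub
    rw [card_range] at this
    omega

lemma conjL_eq_card (μ : List ℕ) (i : ℕ) :
    conjL μ i = #{j ∈ range μ.length | i < μ.getD j 0} := by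
  induction μ with
  | nil => simp [conjL]
  | cons x xs ih =>
    rw [card_filter] at ih ⊢
    rw [List.length_cons, sum_range_succ']
    simp only [List.getD_cons_succ, List.getD_cons_zero, ← ih]
    by_cases hix : i < x <;> simp [conjL, hix]

lemma lt_getD_iff_lt_conjL {μ : List ℕ} (h : μ.Pairwise (· ≥ ·)) (i j : ℕ) :
    i < μ.getD j 0 ↔ j < conjL μ i := by
  rw [conjL_eq_card]
  exact lt_iff_lt_card_filter (getD_antitone h) (fun _ => List.getD_eq_default _ _) j i

lemma conjL_succ_le (μ : List ℕ) (i : ℕ) : conjL μ (i + 1) ≤ conjL μ i :=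
  (List.monotone_filter_right μ fun x => by simp; omega).length_le

lemma conjL_eq_zero {μ : List ℕ} (h : μ.Pairwise (· ≥ ·)) {i : ℕ} (hi : μ.getD 0 0 ≤ i) :
    conjL μ i = 0 :=
  Nat.eq_zero_of_not_pos fun hpos => by have := (lt_getD_iff_lt_conjL h i 0).2 hpos; omega

lemma getD_le_getD_iff_conjL_le_conjL {ν μ : List ℕ} (hν : ν.Pairwise (· ≥ ·))
    (hμ : μ.Pairwise (· ≥ ·)) :
    (∀ j, ν.getD j 0 ≤ μ.getD j 0) ↔ ∀ i, conjL ν i ≤ conjL μ i :=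
  ⟨fun h i => le_of_forall_lt fun j hj => (lt_getD_iff_lt_conjL hμ i j).1
      (((lt_getD_iff_lt_conjL hν i j).2 hj).trans_le (h j)),
    fun h j => le_of_forall_lt fun i hi => (lt_getD_iff_lt_conjL hμ i j).2
      (((lt_getD_iff_lt_conjL hν i j).1 hi).trans_le (h i))⟩

lemma IsPtn.eq_of_getD_eq {μ ρ : List ℕ} (hμ : IsPtn μ) (hρ : IsPtn ρ)
    (h : ∀ j, μ.getD j 0 = ρ.getD j 0) : μ = ρ := by
  refine List.ext_getElem? fun j => ?_
  have hj := h j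
  simp only [List.getD_eq_getElem?_getD] at hj
  cases hμj : μ[j]? <;> cases hρj : ρ[j]? <;> simp only [hμj, hρj, Option.getD_some,
    Option.getD_none] at hj ⊢
  · exact absurd hj.symm (hρ.2 _ (List.mem_of_getElem? hρj)).ne'
  · exact absurd hj (hμ.2 _ (List.mem_of_getElem? hμj)).ne'
  · rw [hj]

lemma IsPtn.eq_of_conjL_eq {μ ρ : List ℕ} (hμ : IsPtn μ) (hρ : IsPtn ρ)
    (h : ∀ i, conjL μ i = conjL ρ i) : μ = ρ :=
  hμ.eq_of_getD_eq hρ fun j => eq_of_forall_lt_iff fun i => by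
    rw [lt_getD_iff_lt_conjL hμ.1, lt_getD_iff_lt_conjL hρ.1, h]

lemma sum_eq_sum_conjL {μ : List ℕ} {n : ℕ} (h : ∀ x ∈ μ, x ≤ n) :
    μ.sum = ∑ i ∈ range n, conjL μ i := by
  induction μ with
  | nil => simp [conjL]
  | cons x xs ih =>
    have hconj : ∀ i, conjL (x :: xs) i = conjL xs i + if i < x then 1 else 0 := fun i => by
      by_cases hix : i < x <;> simp [conjL, hix]
    have hx : ∑ i ∈ range n, (if i < x then 1 else 0) = x := by
      rw [← card_filter, show {i ∈ range n | i < x} = range x by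
        ext i; simp only [mem_filter, mem_range]; have := h x List.mem_cons_self; omega]
      exact card_range x
    rw [List.sum_cons, ih fun y hy => h y (List.mem_cons_of_mem x hy),
      sum_congr rfl fun i _ => hconj i, sum_add_distrib, hx, add_comm]

def ofConj (N : ℕ) (A : ℕ → ℕ) : List ℕ :=
  (List.range (A 0)).map fun j => #{i ∈ range N | j < A i}

section OfConj

variable {N : ℕ} {A : ℕ → ℕ} (hA : Antitone A) (hN : ∀ i, N ≤ i → A i = 0)
include hA hN

lemma isPtn_ofConj : IsPtn (ofConj N A) := by
  refine ⟨List.pairwise_lt_range.map _ fun j j' hjj' =>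
    card_le_card (monotone_filter_right _ fun _ _ hk => hjj'.trans hk), ?_⟩
  simp only [ofConj, List.mem_map, List.mem_range]
  rintro _ ⟨j, hj, rfl⟩
  exact (lt_iff_lt_card_filter hA hN 0 j).1 hj

lemma conjL_ofConj (i : ℕ) : conjL (ofConj N A) i = A i := by
  refine eq_of_forall_lt_iff fun j => ?_
  rw [← lt_getD_iff_lt_conjL (isPtn_ofConj hA hN).1]
  by_cases hj : j < A 0
  · rw [List.getD_eq_getElem _ _ (by simpa [ofConj] using hj)]
    simpa [ofConj] using (lt_iff_lt_card_filter hA hN i j).symm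
  · rw [List.getD_eq_default _ _ (by simpa [ofConj] using hj)]
    have := hA (Nat.zero_le i)
    omega

end OfConj

end Partitions

section Pieri

variable {lam ν : List ℕ}

lemma pieri_summand_eq_pieriWeight (hlam : IsPtn lam) {μ : List ℕ} (hμ : IsPtn μ)
    (hμlam : ∀ i, μ.getD i 0 ≤ lam.getD i 0) :
    (-1 : ℤ[X]) ^ (lam.sum - μ.sum) * fPieriP (lam.getD 0 0) μ ν *
        gPieriP (lam.getD 0 0) lam μ =
      pieriWeight (lam.getD 0 0) (conjL ν) (conjL lam) (conjL μ) := by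
  have hconj := (getD_le_getD_iff_conjL_le_conjL hμ.1 hlam.1).1 hμlam
  have hsum : lam.sum - μ.sum = ∑ i ∈ range (lam.getD 0 0), (conjL lam i - conjL μ i) := by
    rw [sum_eq_sum_conjL fun x hx => le_getD_zero_of_mem hlam.1 hx,
      sum_eq_sum_conjL fun x hx => (le_getD_zero_of_mem hμ.1 hx).trans (hμlam 0),
      sum_tsub_distrib _ fun i _ => hconj i]
  rw [hsum, fPieriP, gPieriP, pieriWeight, ← prod_pow_eq_pow_sum, ← prod_pow_eq_pow_sum,
    ← prod_mul_distrib, ← prod_mul_distrib, ← prod_mul_distrib]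
  refine prod_congr rfl fun i _ => ?_
  rw [colWeight]
  ring

lemma finsum_pieriWeight_eq_sum_colBox (hlam : IsPtn lam) (hν : IsPtn ν)
    (hsub : ∀ i, ν.getD i 0 ≤ lam.getD i 0) :
    ∑ᶠ μ : {μ : List ℕ // IsPtn μ ∧ (∀ i, ν.getD i 0 ≤ μ.getD i 0) ∧
        (∀ i, μ.getD i 0 ≤ lam.getD i 0)},
      pieriWeight (lam.getD 0 0) (conjL ν) (conjL lam) (conjL μ.1) =
    ∑ A ∈ colBox (lam.getD 0 0) (conjL lam),
      pieriWeight (lam.getD 0 0) (conjL ν) (conjL lam) A := by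
  set N := lam.getD 0 0
  rw [← finsum_mem_range (f := pieriWeight N (conjL ν) (conjL lam))
    fun μ ρ h => Subtype.ext (μ.2.1.eq_of_conjL_eq ρ.2.1 (congrFun h))]
  refine finsum_mem_eq_sum_of_inter_support_eq _ (Set.ext fun A => ?_)
  simp only [Set.mem_inter_iff, Set.mem_range, Function.mem_support, mem_coe, mem_colBox,
    and_congr_left_iff]
  intro hw
  constructor
  · rintro ⟨⟨μ, hμ, -, hμlam⟩, rfl⟩
    refine ⟨(getD_le_getD_iff_conjL_le_conjL hμ.1 hlam.1).1 hμlam, fun i hi => ?_⟩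
    exact conjL_eq_zero hμ.1 ((hμlam 0).trans hi)
  · rintro ⟨hAc, hA0⟩
    -- A nonzero weight forces `A (i + 1) ≤ ν'_i ≤ A i` below `N`: `A` is a conjugate partition.
    have hcol := fun {i} => le_of_pieriWeight_ne_zero hw (i := i)
    have hA : Antitone A := antitone_nat_of_succ_le fun i => by
      by_cases hi : i < N
      · exact (hcol hi).1.trans (hcol hi).2
      · simp [hA0 (i + 1) (by omega)]
    have hνA (i : ℕ) : conjL ν i ≤ A i := by
      by_cases hi : i < N
      · exact (hcol hi).2
      · simp [conjL_eq_zero hν.1 ((hsub 0).trans (not_lt.1 hi))]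
    have hμ := isPtn_ofConj hA hA0
    have hconj := conjL_ofConj hA hA0
    refine ⟨⟨ofConj N A, hμ, ?_, ?_⟩, funext hconj⟩
    · exact (getD_le_getD_iff_conjL_le_conjL hν.1 hμ.1).2 fun i => hconj i ▸ hνA i
    · exact (getD_le_getD_iff_conjL_le_conjL hμ.1 hlam.1).2 fun i => hconj i ▸ hAc i

end Pieri

/-- **Orthogonality of the `e`- and `h`-Pieri coefficients.**
For partitions `ν ⊆ λ`,
`∑_{ν ⊆ μ ⊆ λ} (-1)^{|λ|-|μ|} f^{μ}_{ν(1^{|μ|-|ν|})} g^{λ}_{μ(|λ|-|μ|)} = δ_{λν}`. -/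
theorem pieri_orthogonality (lam ν : List ℕ) (hlam : IsPtn lam) (hν : IsPtn ν)
    (hsub : ∀ i, ν.getD i 0 ≤ lam.getD i 0) :
    (∑ᶠ μ : {μ : List ℕ // IsPtn μ ∧ (∀ i, ν.getD i 0 ≤ μ.getD i 0) ∧
        (∀ i, μ.getD i 0 ≤ lam.getD i 0)},
      ((-1 : Polynomial ℤ) ^ (lam.sum - μ.1.sum)) *
        fPieriP (lam.getD 0 0) μ.1 ν * gPieriP (lam.getD 0 0) lam μ.1)
    = if lam = ν then 1 else 0 := by
  rw [finsum_congr fun μ => pieri_summand_eq_pieriWeight hlam μ.2.1 μ.2.2.2,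
    finsum_pieriWeight_eq_sum_colBox hlam hν hsub,
    sum_colBox_pieriWeight _ _ _ (conjL_succ_le lam)]
  refine if_congr ⟨fun h => hlam.eq_of_conjL_eq hν fun i => ?_, fun h _ _ => h ▸ rfl⟩
    rfl rfl
  by_cases hi : i < lam.getD 0 0
  · exact (h i hi).symm
  · rw [conjL_eq_zero hlam.1 (not_lt.1 hi), conjL_eq_zero hν.1 ((hsub 0).trans (not_lt.1 hi))]

end HKKOTY
end

section
/- Let n ≥ 2 and k ≥ l ≥ 1, and let b_1 ∈ B_{(k)}, b_2 ∈ B_{(l)}. In the two-column diagram of b_1 ⊗ b_2, the set of left-column dots that become endpoints of H-lines under the pairing procedure — and hence the resulting element ι(b_1 ⊗ b_2) ∈ B_{(l)} ⊗ B_{(k)} — is the same for every order in which the right-column dots are processed. -/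
open scoped BigOperators Classical

open scoped BigOperators Classical

namespace HKKOTY

/-! ### Crystals `B_{(l)}`, the combinatorial R-matrix and energy functions -/

/-- An element of the crystal `B_{(l)}` of the `l`-th symmetric power for `sl_n`:
a function recording the number of dots in each row `1, …, n`, vanishing elsewhere. -/
def isCrys (n l : ℕ) (b : ℕ → ℕ) : Prop :=
  (∀ j, (j = 0 ∨ n < j) → b j = 0) ∧ (∑ j ∈ Finset.range n, b (j + 1)) = l

/-- An element of the crystal `B_{(1^l)}` (antisymmetric tensors): at most one dot per row. -/
def isCrysA (n l : ℕ) (b : ℕ → ℕ) : Prop :=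
  isCrys n l b ∧ ∀ j, b j ≤ 1

/-- H-line rule for symmetric tensors: given available left-column dot counts `L` and
a right dot in row `a`, its partner is a left dot in the lowest available row strictly above
(`unwinding`, flag `false`), else a left dot in the lowest available row (`winding`, `true`). -/
def stepH (n : ℕ) (L : ℕ → ℕ) (a : ℕ) : Option (ℕ × Bool) :=
  match ((List.range a).filter (fun r => 1 ≤ r ∧ L r ≠ 0)).max? with
  | some r => some (r, false)
  | none =>
    match ((List.range (n + 1)).filter (fun r => 1 ≤ r ∧ L r ≠ 0)).max? with
    | some r => some (r, true)
    | none => none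

/-- H-line rule for antisymmetric tensors: the partner is the highest available left dot
not higher than row `a` (`unwinding`), else the highest available left dot (`winding`). -/
def stepA (n : ℕ) (L : ℕ → ℕ) (a : ℕ) : Option (ℕ × Bool) :=
  match (((List.range (n + 1)).filter (fun r => a ≤ r ∧ 1 ≤ r ∧ L r ≠ 0)).min?) with
  | some r => some (r, false)
  | none =>
    match (((List.range (n + 1)).filter (fun r => 1 ≤ r ∧ L r ≠ 0)).min?) with
    | some r => some (r, true)
    | none => none

/-- Run the pairing procedure on the right-column dots listed (by rows) in `o`;
returns the remaining (unpaired) left-column dot counts and the number of winding pairs. -/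
def runGen (step : (ℕ → ℕ) → ℕ → Option (ℕ × Bool)) : (ℕ → ℕ) → List ℕ → ((ℕ → ℕ) × ℕ)
  | L, [] => (L, 0)
  | L, a :: rest =>
    match step L a with
    | some (r, wind) =>
      let res := runGen step (Function.update L r (L r - 1)) rest
      (res.1, res.2 + if wind then 1 else 0)
    | none => runGen step L rest

/-- The canonical processing order of the dots of `b`: rows from top to bottom. -/
def rOrder (n : ℕ) (b : ℕ → ℕ) : List ℕ :=
  (List.range n).flatMap (fun i => List.replicate (b (i + 1)) (i + 1))

/-- Combinatorial R-matrix and energy for symmetric tensors: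
`iotaPair n b1 b2 = (b2', b1', H)` where `ι(b1 ⊗ b2) = b2' ⊗ b1'` and `H = H(b1 ⊗ b2)`. -/
def iotaPair (n : ℕ) (b1 b2 : ℕ → ℕ) : ((ℕ → ℕ) × (ℕ → ℕ) × ℕ) :=
  let res := runGen (stepH n) b1 (rOrder n b2)
  (fun r => b1 r - res.1 r, fun r => b2 r + res.1 r, res.2)

/-- Same for antisymmetric tensors; the third component is the number of winding pairs,
i.e. `-H(b1 ⊗ b2)`. -/
def iotaPairA (n : ℕ) (b1 b2 : ℕ → ℕ) : ((ℕ → ℕ) × (ℕ → ℕ) × ℕ) :=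
  let res := runGen (stepA n) b1 (rOrder n b2)
  (fun r => b1 r - res.1 r, fun r => b2 r + res.1 r, res.2)

/-- `passLeft n [b_i, …, b_{j-1}] b_j = b_j^{(i)}`: move `b_j` leftwards through the listed
factors using the isomorphism `ι`. -/
def passLeft (n : ℕ) (cs : List (ℕ → ℕ)) (b : ℕ → ℕ) : ℕ → ℕ :=
  cs.foldr (fun c acc => (iotaPair n c acc).1) b

def passLeftA (n : ℕ) (cs : List (ℕ → ℕ)) (b : ℕ → ℕ) : ℕ → ℕ :=
  cs.foldr (fun c acc => (iotaPairA n c acc).1) b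

/-- The energy `E(p) = ∑_{i<j} H(b_i ⊗ b_j^{(i+1)})` of a path (symmetric tensors). -/
def energy (n : ℕ) (p : List (ℕ → ℕ)) : ℕ :=
  ∑ j ∈ Finset.range p.length, ∑ i ∈ Finset.range j,
    (iotaPair n (p.getD i (fun _ => 0))
      (passLeft n ((p.drop (i + 1)).take (j - i - 1)) (p.getD j (fun _ => 0)))).2.2

/-- Minus the energy, `-E(p) = ∑_{i<j} (-H)(b_i ⊗ b_j^{(i+1)})`, of a path of
antisymmetric tensors (each `H` being minus the number of winding pairs). -/
def energyA (n : ℕ) (p : List (ℕ → ℕ)) : ℕ :=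
  ∑ j ∈ Finset.range p.length, ∑ i ∈ Finset.range j,
    (iotaPairA n (p.getD i (fun _ => 0))
      (passLeftA n ((p.drop (i + 1)).take (j - i - 1)) (p.getD j (fun _ => 0)))).2.2

/-- A path in `B_{(μ_1)} ⊗ ⋯ ⊗ B_{(μ_m)}`. -/
def IsPath (n : ℕ) (μ : List ℕ) (p : List (ℕ → ℕ)) : Prop :=
  p.length = μ.length ∧ ∀ j < μ.length, isCrys n (μ.getD j 0) (p.getD j (fun _ => 0))

/-- A path in `B_{(1^{μ_1})} ⊗ ⋯ ⊗ B_{(1^{μ_m})}`. -/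
def IsPathA (n : ℕ) (μ : List ℕ) (p : List (ℕ → ℕ)) : Prop :=
  p.length = μ.length ∧ ∀ j < μ.length, isCrysA n (μ.getD j 0) (p.getD j (fun _ => 0))

/-- The path `p` has content `lam`: the letter `i` occurs `lam i` times in total. -/
def PathContent (n : ℕ) (p : List (ℕ → ℕ)) (lam : ℕ → ℕ) : Prop :=
  ∀ i, 1 ≤ i → i ≤ n → (∑ j ∈ Finset.range p.length, p.getD j (fun _ => 0) i) = lam i

/-- The ground state path associated with the partition `μ`: the `(j+1)`-st factor
(0-indexed `j`) has all its dots in the row `≡ j+1 (mod n)`. -/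
def gspath (n : ℕ) (μ : List ℕ) : List (ℕ → ℕ) :=
  (List.range μ.length).map (fun j => fun x => if x = (j % n) + 1 then μ.getD j 0 else 0)

/-! ### Kashiwara operators -/

/-- Row from which `ẽ_i` removes a dot. -/
def srcI (n i : ℕ) : ℕ := if i = 0 then 1 else i + 1

/-- Row to which `ẽ_i` adds a dot. -/
def dstI (n i : ℕ) : ℕ := if i = 0 then n else i

/-- `ε_i(b)` on `B_{(l)}`. -/
def epsB (n i : ℕ) (b : ℕ → ℕ) : ℕ := b (srcI n i)

/-- `φ_i(b)` on `B_{(l)}`. -/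
def phiB (n i : ℕ) (b : ℕ → ℕ) : ℕ := b (dstI n i)

/-- The Kashiwara operator `ẽ_i` on `B_{(l)}` (`none` encodes `0`). -/
def etB (n i : ℕ) (b : ℕ → ℕ) : Option (ℕ → ℕ) :=
  if b (srcI n i) = 0 then none
  else some (fun x => if x = srcI n i then b x - 1
             else if x = dstI n i then b x + 1 else b x)

/-- `(ε_i, φ_i)` of a tensor product of crystal elements. -/
def ephiL (n i : ℕ) : List (ℕ → ℕ) → ℤ × ℤ
  | [] => (0, 0)
  | b :: rest =>
    let ec := (ephiL n i rest).1
    let pc := (ephiL n i rest).2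
    let eb : ℤ := epsB n i b
    let pb : ℤ := phiB n i b
    (max eb (eb + ec - pb), max pc (pb + pc - ec))

/-- The Kashiwara operator `ẽ_i` on a tensor product:
`ẽ_i(b ⊗ c) = (ẽ_i b) ⊗ c` if `φ_i(b) ≥ ε_i(c)`, else `b ⊗ (ẽ_i c)`. -/
def etL (n i : ℕ) : List (ℕ → ℕ) → Option (List (ℕ → ℕ))
  | [] => none
  | b :: rest =>
    if (ephiL n i rest).1 ≤ (phiB n i b : ℤ) then
      (etB n i b).map (· :: rest)
    else
      (etL n i rest).map (b :: ·)

end HKKOTY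

namespace HKKOTY

open Finset

/-!
The H-line partner of a right dot in row `a` is the first available left row met when the rows
are scanned cyclically upwards starting from row `a - 1`. Scans started from different rows are
rotations of one another, so once two of them have the same first hit `r`, they order all
remaining rows in the same way, and after `r` is used up they again pick the same row. Hence
pairing two right dots in either order removes the same left dots, and any reordering of the right
column, being a product of adjacent transpositions, leaves the unpaired left dots unchanged.
-/

def avail (n : ℕ) (L : ℕ → ℕ) : Finset ℕ := (Icc 1 n).filter (fun s => L s ≠ 0)

lemma mem_avail {n s : ℕ} {L : ℕ → ℕ} : s ∈ avail n L ↔ (1 ≤ s ∧ s ≤ n) ∧ L s ≠ 0 := by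
  simp [avail]

lemma avail_subset_Icc {n : ℕ} {L : ℕ → ℕ} : avail n L ⊆ Icc 1 n := filter_subset _ _

/-- Scanning the rows `a - 1, …, 1, n, …, a` in this order, row `s` is reached after
`cycDist n a s` steps. -/
def cycDist (n a s : ℕ) : ℕ := if s < a then a - 1 - s else a - 1 + n - s

section cycDist

variable {n a : ℕ}

lemma cycDist_injOn : Set.InjOn (cycDist n a) (Set.Icc 1 n) := by
  intro r hr s hs h
  simp only [Set.mem_Icc] at hr hs
  simp only [cycDist] at h
  split_ifs at h <;> omega

lemma cycDist_eq_add {r s : ℕ} (ha : a ≤ n + 1) (hr : 1 ≤ r ∧ r ≤ n) (hs : 1 ≤ s ∧ s ≤ n)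
    (h : cycDist n a r ≤ cycDist n a s) :
    cycDist n a s = cycDist n a r + cycDist n (r + 1) s := by
  simp only [cycDist] at h ⊢
  split_ifs at h ⊢ <;> omega

end cycDist

def IsPartner (n : ℕ) (A : Finset ℕ) (a r : ℕ) : Prop :=
  r ∈ A ∧ ∀ s ∈ A, cycDist n a r ≤ cycDist n a s

section IsPartner

variable {n a r : ℕ} {A : Finset ℕ}

lemma IsPartner.unique {r' : ℕ} (hA : A ⊆ Icc 1 n) (h : IsPartner n A a r)
    (h' : IsPartner n A a r') : r = r' :=
  cycDist_injOn (by simpa using hA h.1) (by simpa using hA h'.1)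
    ((h.2 r' h'.1).antisymm (h'.2 r h.1))

lemma IsPartner.mono {B : Finset ℕ} (h : IsPartner n A a r) (hr : r ∈ B) (hBA : B ⊆ A) :
    IsPartner n B a r :=
  ⟨hr, fun s hs => h.2 s (hBA hs)⟩

lemma IsPartner.isPartner_erase_iff {t : ℕ} (ha : a ≤ n + 1) (hA : A ⊆ Icc 1 n)
    (h : IsPartner n A a r) : IsPartner n (A.erase r) a t ↔ IsPartner n (A.erase r) (r + 1) t := by
  have hIcc : ∀ s ∈ A, 1 ≤ s ∧ s ≤ n := fun s hs => by simpa using hA hs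
  have hadd : ∀ s ∈ A, cycDist n a s = cycDist n a r + cycDist n (r + 1) s := fun s hs =>
    cycDist_eq_add ha (hIcc r h.1) (hIcc s hs) (h.2 s hs)
  refine and_congr_right fun ht => forall₂_congr fun s hs => ?_
  rw [hadd t (mem_of_mem_erase ht), hadd s (mem_of_mem_erase hs)]
  omega

lemma isPartner_of_lt (hA : A ⊆ Icc 1 n) (hr : r ∈ A) (hra : r < a)
    (hmax : ∀ s ∈ A, s < a → s ≤ r) : IsPartner n A a r := by
  refine ⟨hr, fun s hs => ?_⟩
  have hsn : s ≤ n := (mem_Icc.mp (hA hs)).2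
  by_cases hsa : s < a
  · have hsr := hmax s hs hsa
    simp only [cycDist, if_pos hra, if_pos hsa]
    omega
  · simp only [cycDist, if_pos hra, if_neg hsa]
    omega

lemma isPartner_of_forall_le (hr : r ∈ A) (hmax : ∀ s ∈ A, a ≤ s ∧ s ≤ r) :
    IsPartner n A a r := by
  refine ⟨hr, fun s hs => ?_⟩
  have hra : ¬r < a := not_lt.mpr (hmax r hr).1
  have hsa : ¬s < a := not_lt.mpr (hmax s hs).1
  have hsr := (hmax s hs).2
  simp only [cycDist, if_neg hra, if_neg hsa]
  omega

end IsPartner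

def partner (n : ℕ) (L : ℕ → ℕ) (a : ℕ) : Option ℕ := (stepH n L a).map Prod.fst

section partner

variable {n a : ℕ} {L : ℕ → ℕ}

lemma mem_filter_range_avail {m s : ℕ} :
    s ∈ (List.range m).filter (fun r => 1 ≤ r ∧ L r ≠ 0) ↔ s < m ∧ 1 ≤ s ∧ L s ≠ 0 := by
  simp

lemma isPartner_of_partner_eq_some {r : ℕ} (ha : a ≤ n + 1) (h : partner n L a = some r) :
    IsPartner n (avail n L) a r := by
  rcases h₁ : ((List.range a).filter (fun r => 1 ≤ r ∧ L r ≠ 0)).max? with _ | r₁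
  · rcases h₂ : ((List.range (n + 1)).filter (fun r => 1 ≤ r ∧ L r ≠ 0)).max? with _ | r₂
    · rw [partner, stepH, h₁, h₂] at h
      simp at h
    · rw [partner, stepH, h₁, h₂] at h
      simp only [Option.map_some, Option.some.injEq] at h
      subst h
      simp only [List.max?_eq_some_iff, List.max?_eq_none_iff, List.eq_nil_iff_forall_not_mem,
        mem_filter_range_avail] at h₁ h₂
      obtain ⟨⟨hr, hr1, hrL⟩, hmax⟩ := h₂
      refine isPartner_of_forall_le (mem_avail.mpr ⟨⟨hr1, by omega⟩, hrL⟩) fun s hs => ?_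
      obtain ⟨⟨hs1, hsn⟩, hsL⟩ := mem_avail.mp hs
      exact ⟨not_lt.mp fun hsa => h₁ s ⟨hsa, hs1, hsL⟩, hmax s ⟨by omega, hs1, hsL⟩⟩
  · rw [partner, stepH, h₁] at h
    simp only [Option.map_some, Option.some.injEq] at h
    subst h
    simp only [List.max?_eq_some_iff, mem_filter_range_avail] at h₁
    obtain ⟨⟨hra, hr1, hrL⟩, hmax⟩ := h₁
    refine isPartner_of_lt avail_subset_Icc (mem_avail.mpr ⟨⟨hr1, by omega⟩, hrL⟩) hra
      fun s hs hsa => ?_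
    obtain ⟨⟨hs1, -⟩, hsL⟩ := mem_avail.mp hs
    exact hmax s ⟨hsa, hs1, hsL⟩

lemma avail_eq_empty_of_partner_eq_none (h : partner n L a = none) : avail n L = ∅ := by
  ext s
  simp only [mem_avail, Finset.notMem_empty, iff_false]
  rcases h₁ : ((List.range a).filter (fun r => 1 ≤ r ∧ L r ≠ 0)).max? with _ | r₁
  · rcases h₂ : ((List.range (n + 1)).filter (fun r => 1 ≤ r ∧ L r ≠ 0)).max? with _ | r₂
    · simp only [List.max?_eq_none_iff, List.eq_nil_iff_forall_not_mem,
        mem_filter_range_avail] at h₂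
      exact fun ⟨⟨hs1, hsn⟩, hsL⟩ => h₂ s ⟨by omega, hs1, hsL⟩
    · rw [partner, stepH, h₁, h₂] at h
      simp at h
  · rw [partner, stepH, h₁] at h
    simp at h

lemma partner_eq_some_iff {r : ℕ} (ha : a ≤ n + 1) :
    partner n L a = some r ↔ IsPartner n (avail n L) a r := by
  refine ⟨isPartner_of_partner_eq_some ha, fun h => ?_⟩
  obtain ⟨r', hr'⟩ : ∃ r', partner n L a = some r' := Option.ne_none_iff_exists'.mp fun hn => by
    simpa [avail_eq_empty_of_partner_eq_none hn] using h.1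
  rw [hr', (isPartner_of_partner_eq_some ha hr').unique avail_subset_Icc h]

lemma partner_eq_none_iff (ha : a ≤ n + 1) : partner n L a = none ↔ avail n L = ∅ := by
  refine ⟨avail_eq_empty_of_partner_eq_none, fun h => ?_⟩
  by_contra hp
  obtain ⟨r, hr⟩ := Option.ne_none_iff_exists'.mp hp
  simpa [h] using (isPartner_of_partner_eq_some ha hr).1

lemma partner_congr {L' : ℕ → ℕ} (ha : a ≤ n + 1) (h : avail n L = avail n L') :
    partner n L a = partner n L' a :=
  Option.ext fun r => by rw [partner_eq_some_iff ha, partner_eq_some_iff ha, h]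

lemma avail_update_sub_one_subset {r : ℕ} :
    avail n (Function.update L r (L r - 1)) ⊆ avail n L := by
  intro s
  simp only [mem_avail, Function.update_apply]
  split_ifs with hs
  · subst hs; omega
  · exact id

lemma mem_avail_update_of_ne {r s v : ℕ} (hs : s ≠ r) :
    s ∈ avail n (Function.update L r v) ↔ s ∈ avail n L := by
  simp only [mem_avail, Function.update_of_ne hs]

lemma avail_update_sub_one_of_ne_one {r : ℕ} (h0 : L r ≠ 0) (h1 : L r ≠ 1) :
    avail n (Function.update L r (L r - 1)) = avail n L := by
  ext s
  by_cases hs : s = r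
  · subst hs
    simp only [mem_avail, Function.update_self]
    omega
  · exact mem_avail_update_of_ne hs

lemma avail_update_sub_one_of_eq_one {r : ℕ} (h1 : L r = 1) :
    avail n (Function.update L r (L r - 1)) = (avail n L).erase r := by
  ext s
  by_cases hs : s = r
  · subst hs
    simp [mem_avail, h1]
  · rw [mem_erase, mem_avail_update_of_ne hs]
    exact ⟨fun h => ⟨hs, h⟩, And.right⟩

lemma partner_update_sub_one_of_ne {r r' : ℕ} (ha : a ≤ n + 1) (h : partner n L a = some r)
    (hne : r' ≠ r) : partner n (Function.update L r' (L r' - 1)) a = some r := by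
  have hr := isPartner_of_partner_eq_some ha h
  exact (partner_eq_some_iff ha).2 <|
    hr.mono ((mem_avail_update_of_ne hne.symm).2 hr.1) avail_update_sub_one_subset

end partner

def removePartner (n : ℕ) (L : ℕ → ℕ) (a : ℕ) : ℕ → ℕ :=
  match partner n L a with
  | some r => Function.update L r (L r - 1)
  | none => L

section removePartner

variable {n a b : ℕ} {L : ℕ → ℕ}

lemma removePartner_of_partner_eq_some {r : ℕ} (h : partner n L a = some r) :
    removePartner n L a = Function.update L r (L r - 1) := by
  simp only [removePartner, h]

lemma removePartner_of_partner_eq_none (h : partner n L a = none) : removePartner n L a = L := by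
  simp only [removePartner, h]

lemma removePartner_congr (h : partner n L a = partner n L b) :
    removePartner n L a = removePartner n L b := by
  simp only [removePartner, h]

lemma partner_removePartner_eq (ha : a ≤ n + 1) (hb : b ≤ n + 1)
    (h : partner n L a = partner n L b) :
    partner n (removePartner n L a) a = partner n (removePartner n L a) b := by
  rcases hpa : partner n L a with _ | r
  · rw [removePartner_of_partner_eq_none hpa, ← h]
  have hpb : partner n L b = some r := h ▸ hpa
  have hra := isPartner_of_partner_eq_some ha hpa
  have hrb := isPartner_of_partner_eq_some hb hpb
  obtain ⟨⟨-, hrn⟩, hr0⟩ := mem_avail.mp hra.1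
  rw [removePartner_of_partner_eq_some hpa]
  by_cases h1 : L r = 1
  · -- after `r` is used up, every scan that first hit `r` goes on like the scan from row `r`
    have hnext : ∀ c ≤ n + 1, IsPartner n (avail n L) c r →
        partner n (Function.update L r (L r - 1)) c
          = partner n (Function.update L r (L r - 1)) (r + 1) := fun c hc hcr =>
      Option.ext fun t => by
        rw [partner_eq_some_iff hc, partner_eq_some_iff (by omega),
          avail_update_sub_one_of_eq_one h1, hcr.isPartner_erase_iff hc avail_subset_Icc]
    rw [hnext a ha hra, hnext b hb hrb]
  · rw [partner_congr ha (avail_update_sub_one_of_ne_one hr0 h1),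
      partner_congr hb (avail_update_sub_one_of_ne_one hr0 h1), hpa, hpb]

lemma removePartner_comm (ha : a ≤ n + 1) (hb : b ≤ n + 1) :
    removePartner n (removePartner n L a) b = removePartner n (removePartner n L b) a := by
  by_cases h : partner n L a = partner n L b
  · rw [removePartner_congr h, removePartner_congr (partner_removePartner_eq hb ha h.symm)]
  have hnone : partner n L a = none ↔ partner n L b = none := by
    rw [partner_eq_none_iff ha, partner_eq_none_iff hb]
  obtain ⟨ra, hra⟩ : ∃ ra, partner n L a = some ra :=
    Option.ne_none_iff_exists'.mp fun hn => h (by rw [hn, hnone.1 hn])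
  obtain ⟨rb, hrb⟩ : ∃ rb, partner n L b = some rb :=
    Option.ne_none_iff_exists'.mp fun hn => h (by rw [hn, hnone.2 hn])
  have hne : ra ≠ rb := fun e => h (by rw [hra, hrb, e])
  rw [removePartner_of_partner_eq_some hra, removePartner_of_partner_eq_some hrb,
    removePartner_of_partner_eq_some (partner_update_sub_one_of_ne hb hrb hne),
    removePartner_of_partner_eq_some (partner_update_sub_one_of_ne ha hra hne.symm),
    Function.update_of_ne hne.symm, Function.update_of_ne hne]
  exact Function.update_comm hne _ _ _

end removePartner

lemma runGen_stepH_fst_eq_foldl (n : ℕ) (L : ℕ → ℕ) (o : List ℕ) :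
    (runGen (stepH n) L o).1 = o.foldl (removePartner n) L := by
  induction o generalizing L with
  | nil => rfl
  | cons a o ih =>
    rw [List.foldl_cons, ← ih]
    rcases h : stepH n L a with _ | ⟨r, w⟩
    · have hp : partner n L a = none := by simp [partner, h]
      simp [runGen, h, removePartner_of_partner_eq_none hp]
    · have hp : partner n L a = some r := by simp [partner, h]
      simp [runGen, h, removePartner_of_partner_eq_some hp]

lemma runGen_stepH_fst_perm {n : ℕ} {o o' : List ℕ} (hp : o.Perm o') (ho : ∀ a ∈ o, a ≤ n + 1)
    (L : ℕ → ℕ) : (runGen (stepH n) L o).1 = (runGen (stepH n) L o').1 := by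
  rw [runGen_stepH_fst_eq_foldl, runGen_stepH_fst_eq_foldl,
    hp.foldl_eq' fun a ha b hb _ => removePartner_comm (ho a ha) (ho b hb)]

lemma le_of_mem_rOrder {n a : ℕ} {b : ℕ → ℕ} (ha : a ∈ rOrder n b) : a ≤ n := by
  obtain ⟨i, hi, ha⟩ := List.mem_flatMap.mp ha
  rw [List.eq_of_mem_replicate ha]
  exact List.mem_range.mp hi

theorem iota_order_independent_general
    (n : ℕ)
    (b1 b2 : ℕ → ℕ)
    (o o' : List ℕ) (ho : o.Perm (rOrder n b2)) (ho' : o'.Perm (rOrder n b2)) :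
    (runGen (stepH n) b1 o).1 = (runGen (stepH n) b1 o').1 ∧
    ((fun r => b1 r - (runGen (stepH n) b1 o).1 r, fun r => b2 r + (runGen (stepH n) b1 o).1 r)
      = (fun r => b1 r - (runGen (stepH n) b1 o').1 r,
         fun r => b2 r + (runGen (stepH n) b1 o').1 r)) := by
  have hrows : ∀ a ∈ o, a ≤ n + 1 := fun a ha =>
    (le_of_mem_rOrder (ho.mem_iff.mp ha)).trans n.le_succ
  have hfst := runGen_stepH_fst_perm (ho.trans ho'.symm) hrows b1
  exact ⟨hfst, by rw [hfst]⟩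

/-- **Order-independence of the H-line pairing: the isomorphism `ι`.**
For `b_1 ∈ B_{(k)}`, `b_2 ∈ B_{(l)}` with `k ≥ l`, the set of left-column dots used as
endpoints of H-lines (equivalently, the multiset of unpaired left dots), and hence the
element `ι(b_1 ⊗ b_2) ∈ B_{(l)} ⊗ B_{(k)}`, does not depend on the order in which the
right-column dots are processed. -/
theorem iota_order_independent
    (n k l : ℕ) (hn : 2 ≤ n) (hkl : l ≤ k) (hl : 1 ≤ l)
    (b1 b2 : ℕ → ℕ) (hb1 : isCrys n k b1) (hb2 : isCrys n l b2)
    (o o' : List ℕ) (ho : o.Perm (rOrder n b2)) (ho' : o'.Perm (rOrder n b2)) :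
    (runGen (stepH n) b1 o).1 = (runGen (stepH n) b1 o').1 ∧
    ((fun r => b1 r - (runGen (stepH n) b1 o).1 r, fun r => b2 r + (runGen (stepH n) b1 o).1 r)
      = (fun r => b1 r - (runGen (stepH n) b1 o').1 r,
         fun r => b2 r + (runGen (stepH n) b1 o').1 r)) :=
  iota_order_independent_general n b1 b2 o o' ho ho'

end HKKOTY
end

section
/- Let n ≥ 2 and k ≥ l ≥ 1, and let b_1 ∈ B_{(k)}, b_2 ∈ B_{(l)}. The number of winding pairs produced by the pairing procedure on the two-column diagram of b_1 ⊗ b_2 — i.e. the value H(b_1 ⊗ b_2) — is the same for every order in which the right-column dots are processed. -/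
open scoped BigOperators Classical

open scoped BigOperators Classical

namespace HKKOTY

open Finset

/-!
Since `b₁` has at least as many dots as `b₂`, every right dot finds a partner, so by induction on
permutations it suffices to swap two adjacent right dots, in rows `a ≤ b`: both orders must use
the same left dots and create the same number of winding pairs. If no left dot sits in rows
`a, …, b - 1`, the two right dots face the same choices. Otherwise the dot in row `b` unwinds to the
lowest such left dot; the dot in row `a` either unwinds too, or winds to the lowest left dot `M`.
Either the two picks are different rows that do not interfere, or (when `M` lies above row `b`)
both orders use `M` and then the next lowest left dot, with exactly one winding pair each time.
-/

def removeDot (L : ℕ → ℕ) (r : ℕ) : ℕ → ℕ := Function.update L r (L r - 1)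

section RemoveDot

variable {L : ℕ → ℕ} {r s : ℕ}

theorem removeDot_of_ne (h : s ≠ r) : removeDot L r s = L s :=
  Function.update_of_ne h _ _

theorem removeDot_le (r s : ℕ) : removeDot L r s ≤ L s := by
  rcases eq_or_ne s r with rfl | h
  · simp [removeDot]
  · rw [removeDot_of_ne h]

theorem removeDot_eq_zero (h : L s = 0) : removeDot L r s = 0 :=
  Nat.eq_zero_of_le_zero (h ▸ removeDot_le r s)

theorem removeDot_comm (L : ℕ → ℕ) (h : r ≠ s) :
    removeDot (removeDot L r) s = removeDot (removeDot L s) r := by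
  funext x
  simp only [removeDot, Function.update_apply]
  split_ifs <;> omega

theorem sum_removeDot {t : Finset ℕ} (hr : r ∈ t) (hL : L r ≠ 0) :
    ∑ x ∈ t, removeDot L r x + 1 = ∑ x ∈ t, L x := by
  rw [removeDot, sum_update_of_mem hr, sum_eq_sum_sdiff_singleton_add hr L]
  omega

end RemoveDot

/-- Rows are numbered `1, 2, …` from the top, so the lowest occupied row above `m` is the largest
index `r < m` with `L r ≠ 0`. -/
structure IsLowestAbove (L : ℕ → ℕ) (m r : ℕ) : Prop where
  one_le : 1 ≤ r
  lt : r < m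
  ne_zero : L r ≠ 0
  eq_zero : ∀ s, r < s → s < m → L s = 0

namespace IsLowestAbove

variable {L : ℕ → ℕ} {m r : ℕ}

theorem le_of_ne_zero (h : IsLowestAbove L m r) {s : ℕ} (hs : L s ≠ 0) (hsm : s < m) : s ≤ r :=
  not_lt.mp fun hrs => hs (h.eq_zero s hrs hsm)

theorem removeDot {s : ℕ} (h : IsLowestAbove L m r) (hs : s ≠ r) :
    IsLowestAbove (removeDot L s) m r :=
  ⟨h.one_le, h.lt, by rw [removeDot_of_ne hs.symm]; exact h.ne_zero,
    fun t hrt htm => removeDot_eq_zero (h.eq_zero t hrt htm)⟩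

theorem of_lt {m' : ℕ} (h : IsLowestAbove L m r) (hrm' : r < m') (hL : ∀ s, m ≤ s → L s = 0) :
    IsLowestAbove L m' r := by
  refine ⟨h.one_le, hrm', h.ne_zero, fun s hrs hsm' => ?_⟩
  by_cases hsm : s < m
  exacts [h.eq_zero s hrs hsm, hL s (not_lt.mp hsm)]

end IsLowestAbove

section StepH

variable {n : ℕ} {L : ℕ → ℕ} {m r : ℕ}

theorem max?_filter_eq_some_iff :
    ((List.range m).filter (fun s => 1 ≤ s ∧ L s ≠ 0)).max? = some r ↔ IsLowestAbove L m r := by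
  simp only [List.max?_eq_some_iff, List.mem_filter, List.mem_range, decide_eq_true_eq]
  constructor
  · rintro ⟨⟨hrm, h1, hr⟩, hmax⟩
    refine ⟨h1, hrm, hr, fun s hrs hsm => ?_⟩
    by_contra hs
    exact absurd (hmax s ⟨hsm, by omega, hs⟩) (by omega)
  · rintro ⟨h1, hrm, hr, hmax⟩
    refine ⟨⟨hrm, h1, hr⟩, fun s ⟨hsm, _, hs⟩ => ?_⟩
    by_contra hrs
    exact hs (hmax s (by omega) hsm)

theorem max?_filter_eq_none_iff :
    ((List.range m).filter (fun s => 1 ≤ s ∧ L s ≠ 0)).max? = none ↔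
      ∀ s, 1 ≤ s → s < m → L s = 0 := by
  simp only [List.max?_eq_none_iff, List.filter_eq_nil_iff, List.mem_range, decide_eq_true_eq]
  exact ⟨fun h s h1 hs => by simpa [h1] using h s hs, fun h s hs ⟨h1, hL⟩ => hL (h s h1 hs)⟩

theorem exists_isLowestAbove_or_forall_eq_zero (L : ℕ → ℕ) (m : ℕ) :
    (∃ r, IsLowestAbove L m r) ∨ ∀ s, 1 ≤ s → s < m → L s = 0 := by
  cases h : ((List.range m).filter (fun s => 1 ≤ s ∧ L s ≠ 0)).max? with
  | some r => exact .inl ⟨r, max?_filter_eq_some_iff.mp h⟩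
  | none => exact .inr (max?_filter_eq_none_iff.mp h)

theorem exists_isLowestAbove_of_sum_ne_zero (hL0 : L 0 = 0)
    (h : ∑ s ∈ range (n + 1), L s ≠ 0) : ∃ M, IsLowestAbove L (n + 1) M := by
  refine (exists_isLowestAbove_or_forall_eq_zero L (n + 1)).resolve_right fun hzero => h ?_
  refine sum_eq_zero fun s hs => ?_
  rcases Nat.eq_zero_or_pos s with rfl | hs1
  exacts [hL0, hzero s hs1 (mem_range.mp hs)]

theorem stepH_of_isLowestAbove {a : ℕ} (h : IsLowestAbove L a r) :
    stepH n L a = some (r, false) := by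
  rw [stepH, max?_filter_eq_some_iff.mpr h]

theorem stepH_of_forall_eq_zero {a M : ℕ} (h : ∀ s, 1 ≤ s → s < a → L s = 0)
    (hM : IsLowestAbove L (n + 1) M) : stepH n L a = some (M, true) := by
  rw [stepH, max?_filter_eq_none_iff.mpr h, max?_filter_eq_some_iff.mpr hM]

theorem stepH_eq_of_forall_eq_zero {a b : ℕ} (hab : a ≤ b)
    (hgap : ∀ s, a ≤ s → s < b → L s = 0) : stepH n L a = stepH n L b := by
  obtain ⟨d, rfl⟩ := Nat.exists_eq_add_of_le hab
  have hfilter : ((List.range (a + d)).filter (fun s => 1 ≤ s ∧ L s ≠ 0)) =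
      (List.range a).filter (fun s => 1 ≤ s ∧ L s ≠ 0) := by
    rw [List.range_add, List.filter_append, List.append_right_eq_self, List.filter_eq_nil_iff]
    simp only [List.mem_map, List.mem_range, decide_eq_true_eq]
    rintro _ ⟨s, hs, rfl⟩ ⟨-, hL⟩
    exact hL (hgap _ (by omega) (by omega))
  rw [stepH, stepH, hfilter]

theorem exists_stepH_eq_some (hL0 : L 0 = 0) (hL : ∀ j, n < j → L j = 0)
    (h : ∑ s ∈ range (n + 1), L s ≠ 0) (a : ℕ) :
    ∃ r w, stepH n L a = some (r, w) ∧ r ∈ range (n + 1) ∧ L r ≠ 0 := by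
  have hle : ∀ {r}, L r ≠ 0 → r ∈ range (n + 1) := fun {r} hr =>
    mem_range.mpr (Nat.lt_succ_of_le (not_lt.mp fun hlt => hr (hL r hlt)))
  rcases exists_isLowestAbove_or_forall_eq_zero L a with ⟨r, hr⟩ | hzero
  · exact ⟨r, false, stepH_of_isLowestAbove hr, hle hr.ne_zero, hr.ne_zero⟩
  · obtain ⟨M, hM⟩ := exists_isLowestAbove_of_sum_ne_zero hL0 h
    exact ⟨M, true, stepH_of_forall_eq_zero hzero hM, hle hM.ne_zero, hM.ne_zero⟩

end StepH

section RunGen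

variable {step : (ℕ → ℕ) → ℕ → Option (ℕ × Bool)} {L : ℕ → ℕ} {a b r s : ℕ} {w v : Bool}

theorem runGen_cons_of_eq_some (h : step L a = some (r, w)) (t : List ℕ) :
    runGen step L (a :: t) =
      ((runGen step (removeDot L r) t).1, (runGen step (removeDot L r) t).2 + w.toNat) := by
  cases w <;> simp [runGen, h, removeDot]

theorem runGen_swap_of_ne (hrs : r ≠ s) (ha : step L a = some (r, w)) (hb : step L b = some (s, v))
    (hb' : step (removeDot L r) b = some (s, v)) (ha' : step (removeDot L s) a = some (r, w))
    (t : List ℕ) : runGen step L (a :: b :: t) = runGen step L (b :: a :: t) := by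
  rw [runGen_cons_of_eq_some ha, runGen_cons_of_eq_some hb, runGen_cons_of_eq_some hb',
    runGen_cons_of_eq_some ha', removeDot_comm L hrs, add_right_comm]

theorem runGen_swap_of_same_rows {w' v' : Bool} (ha : step L a = some (r, w))
    (hb : step L b = some (r, w')) (hb' : step (removeDot L r) b = some (s, v))
    (ha' : step (removeDot L r) a = some (s, v')) (hw : v.toNat + w.toNat = v'.toNat + w'.toNat)
    (t : List ℕ) : runGen step L (a :: b :: t) = runGen step L (b :: a :: t) := by
  rw [runGen_cons_of_eq_some ha, runGen_cons_of_eq_some hb, runGen_cons_of_eq_some hb',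
    runGen_cons_of_eq_some ha', add_assoc, add_assoc, hw]

end RunGen

section Swap

variable {n : ℕ} {L : ℕ → ℕ} {a b : ℕ}

theorem runGen_stepH_swap_of_gap (hab : a ≤ b) (hgap : ∀ s, a ≤ s → s < b → L s = 0)
    (hL0 : L 0 = 0) (hL : ∀ j, n < j → L j = 0) (h2 : 2 ≤ ∑ s ∈ range (n + 1), L s)
    (t : List ℕ) : runGen (stepH n) L (a :: b :: t) = runGen (stepH n) L (b :: a :: t) := by
  obtain ⟨r, w, ha, hr, hLr⟩ := exists_stepH_eq_some hL0 hL (by omega) a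
  have hsum := sum_removeDot hr hLr
  obtain ⟨s, v, hb', -⟩ := exists_stepH_eq_some (L := removeDot L r) (removeDot_eq_zero hL0)
    (fun j hj => removeDot_eq_zero (hL j hj)) (by omega) b
  have ha' := stepH_eq_of_forall_eq_zero (n := n) (L := removeDot L r) hab
    fun s has hsb => removeDot_eq_zero (hgap s has hsb)
  exact runGen_swap_of_same_rows ha (stepH_eq_of_forall_eq_zero hab hgap ▸ ha) hb' (ha' ▸ hb') rfl t

theorem runGen_stepH_swap_of_le (hab : a ≤ b) (hL0 : L 0 = 0) (hL : ∀ j, n < j → L j = 0)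
    (h2 : 2 ≤ ∑ s ∈ range (n + 1), L s) (t : List ℕ) :
    runGen (stepH n) L (a :: b :: t) = runGen (stepH n) L (b :: a :: t) := by
  by_cases hgap : ∀ s, a ≤ s → s < b → L s = 0
  · exact runGen_stepH_swap_of_gap hab hgap hL0 hL h2 t
  obtain ⟨rb, hrb, harb⟩ : ∃ rb, IsLowestAbove L b rb ∧ a ≤ rb := by
    push Not at hgap
    obtain ⟨s, has, hsb, hs⟩ := hgap
    rcases exists_isLowestAbove_or_forall_eq_zero L b with ⟨rb, hrb⟩ | hzero
    · exact ⟨rb, hrb, has.trans (hrb.le_of_ne_zero hs hsb)⟩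
    · exact absurd (hzero s (Nat.pos_of_ne_zero fun hs0 => hs (hs0 ▸ hL0)) hsb) hs
  have hb := stepH_of_isLowestAbove (n := n) hrb
  rcases exists_isLowestAbove_or_forall_eq_zero L a with ⟨ra, hra⟩ | hzero
  · have hne : ra ≠ rb := (hra.lt.trans_le harb).ne
    exact runGen_swap_of_ne hne (stepH_of_isLowestAbove hra) hb
      (stepH_of_isLowestAbove (hrb.removeDot hne))
      (stepH_of_isLowestAbove (hra.removeDot hne.symm)) t
  obtain ⟨M, hM⟩ := exists_isLowestAbove_of_sum_ne_zero (n := n) hL0 (by omega)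
  have ha := stepH_of_forall_eq_zero hzero hM
  have hzero' : ∀ s, 1 ≤ s → s < a → removeDot L rb s = 0 :=
    fun s h1 hsa => removeDot_eq_zero (hzero s h1 hsa)
  by_cases hMb : M < b
  · -- `M` is then also the lowest dot above `b`; both orders take `M`, then the next lowest `M₁`.
    have hrbM : rb = M := le_antisymm
      (hM.le_of_ne_zero hrb.ne_zero (Nat.lt_succ_of_le (not_lt.mp fun h => hrb.ne_zero (hL rb h))))
      (hrb.le_of_ne_zero hM.ne_zero hMb)
    subst hrbM
    have hsum := sum_removeDot (mem_range.mpr hM.lt) hM.ne_zero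
    have hL' : ∀ j, n < j → removeDot L rb j = 0 := fun j hj => removeDot_eq_zero (hL j hj)
    obtain ⟨M₁, hM₁⟩ := exists_isLowestAbove_of_sum_ne_zero (n := n) (L := removeDot L rb)
      (removeDot_eq_zero hL0) (by omega)
    have hM₁b : M₁ < b :=
      (hM.le_of_ne_zero (fun h => hM₁.ne_zero (removeDot_eq_zero h)) hM₁.lt).trans_lt hMb
    exact runGen_swap_of_same_rows ha hb (stepH_of_isLowestAbove (hM₁.of_lt hM₁b hL'))
      (stepH_of_forall_eq_zero hzero' hM₁) rfl t
  · have hne : M ≠ rb := by have := hrb.lt; omega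
    exact runGen_swap_of_ne hne ha hb (stepH_of_isLowestAbove (hrb.removeDot hne))
      (stepH_of_forall_eq_zero hzero' (hM.removeDot hne.symm)) t

end Swap

theorem runGen_stepH_swap {n : ℕ} {L : ℕ → ℕ} (hL0 : L 0 = 0) (hL : ∀ j, n < j → L j = 0)
    (h2 : 2 ≤ ∑ s ∈ range (n + 1), L s) (a b : ℕ) (t : List ℕ) :
    runGen (stepH n) L (a :: b :: t) = runGen (stepH n) L (b :: a :: t) := by
  rcases le_total a b with hab | hba
  exacts [runGen_stepH_swap_of_le hab hL0 hL h2 t, (runGen_stepH_swap_of_le hba hL0 hL h2 t).symm]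

theorem runGen_stepH_perm {n : ℕ} {o o' : List ℕ} (h : o.Perm o') {L : ℕ → ℕ} (hL0 : L 0 = 0)
    (hL : ∀ j, n < j → L j = 0) (hlen : o.length ≤ ∑ s ∈ range (n + 1), L s) :
    runGen (stepH n) L o = runGen (stepH n) L o' := by
  induction h generalizing L with
  | nil => rfl
  | cons x _ ih =>
    rw [List.length_cons] at hlen
    obtain ⟨r, w, hx, hr, hLr⟩ := exists_stepH_eq_some hL0 hL (by omega) x
    have hsum := sum_removeDot hr hLr
    rw [runGen_cons_of_eq_some hx, runGen_cons_of_eq_some hx, ih (removeDot_eq_zero hL0)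
      (fun j hj => removeDot_eq_zero (hL j hj)) (by omega)]
  | swap x y t =>
    simp only [List.length_cons] at hlen
    exact runGen_stepH_swap hL0 hL (by omega) y x t
  | trans h₁₂ _ ih₁₂ ih₂₃ =>
    exact (ih₁₂ hL0 hL hlen).trans (ih₂₃ hL0 hL (h₁₂.length_eq ▸ hlen))

theorem length_rOrder (n : ℕ) (b : ℕ → ℕ) : (rOrder n b).length = ∑ j ∈ range n, b (j + 1) := by
  simp [rOrder, List.length_flatMap, sum_eq_multiset_sum, Multiset.range]

theorem H_order_independent_general
    (n k l : ℕ) (hkl : l ≤ k)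
    (b1 b2 : ℕ → ℕ) (hb1 : isCrys n k b1) (hb2 : isCrys n l b2)
    (o o' : List ℕ) (ho : o.Perm (rOrder n b2)) (ho' : o'.Perm (rOrder n b2)) :
    (runGen (stepH n) b1 o).2 = (runGen (stepH n) b1 o').2 := by
  have hb1_zero : b1 0 = 0 := hb1.1 0 (.inl rfl)
  have hsum : ∑ s ∈ range (n + 1), b1 s = k := by rw [sum_range_succ', hb1_zero, hb1.2, add_zero]
  have hlen : o.length = l := by rw [ho.length_eq, length_rOrder, hb2.2]
  rw [runGen_stepH_perm (ho.trans ho'.symm) hb1_zero (fun j hj => hb1.1 j (.inr hj)) (by omega)]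

/-- **Order-independence of the H-line pairing: the energy function `H`.**
For `b_1 ∈ B_{(k)}`, `b_2 ∈ B_{(l)}` with `k ≥ l`, the number of winding pairs produced by
the pairing procedure, i.e. the value `H(b_1 ⊗ b_2)`, does not depend on the order in
which the right-column dots are processed. -/
theorem H_order_independent
    (n k l : ℕ) (hn : 2 ≤ n) (hkl : l ≤ k) (hl : 1 ≤ l)
    (b1 b2 : ℕ → ℕ) (hb1 : isCrys n k b1) (hb2 : isCrys n l b2)
    (o o' : List ℕ) (ho : o.Perm (rOrder n b2)) (ho' : o'.Perm (rOrder n b2)) :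
    (runGen (stepH n) b1 o).2 = (runGen (stepH n) b1 o').2 :=
  H_order_independent_general n k l hkl b1 b2 hb1 hb2 o o' ho ho'

end HKKOTY
end

section
/- Fix n ≥ 2 and 0 ≤ r < n. For a positive integer L with L ≡ r (mod n), a single-column path of length L is a map b : {1,…,L} → {1,…,n} (with b written p = ⋯ ⊗ b_2 ⊗ b_1, indices counted from the right end), with energy E(b) = Σ_{j=1}^{L−1} j·θ(b_{j+1} − b_j), where θ(z) = 1 if z ≥ 0 and 0 if z < 0. Let b̄ be the ground state path, b̄_j = the unique element of {1,…,n} congruent to r + 1 − j (mod n). Then for every C ≥ 0 there exists N such that for all L ≡ r (mod n) and all single-column paths b of length L: if b_j ≠ b̄_j for some j > N, then E(b) − E(b̄) > C. (In other words, E(p) − E(p̄) → ∞ as L → ∞ unless the set {j : b_j ≠ b̄_j} stays bounded.) -/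
namespace HKKOTY

open Finset

/-- Energy of a single-column path `p = ⋯ ⊗ b_2 ⊗ b_1` of length `L`:
`E(b) = ∑_{j=1}^{L-1} j·θ(b_{j+1} - b_j)` with `θ(z) = 1` iff `z ≥ 0`. -/
def colEnergy (L : ℕ) (b : ℕ → ℕ) : ℕ :=
  ∑ j ∈ Finset.Icc 1 (L - 1), j * (if b j ≤ b (j + 1) then 1 else 0)

/-- The ground state single-column path: `b̄_j` is the unique element of `{1, …, n}`
congruent to `r + 1 - j (mod n)`. -/
def colGs (n r : ℕ) (j : ℕ) : ℕ := ((r + (n - 1) * j) % n) + 1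

/-- Ascent indicator at step `j`. -/
def chi (b : ℕ → ℕ) (j : ℕ) : ℕ := if b j ≤ b (j + 1) then 1 else 0

/-- Number of ascents among steps `j ∈ [a, c)`. -/
def segA (b : ℕ → ℕ) (a c : ℕ) : ℕ := ∑ j ∈ Finset.Ico a c, chi b j

lemma segA_split (b : ℕ → ℕ) {a d c : ℕ} (h1 : a ≤ d) (h2 : d ≤ c) :
    segA b a c = segA b a d + segA b d c :=
  (Finset.sum_Ico_consecutive _ h1 h2).symm

lemma colGs_pos (n r j : ℕ) : 1 ≤ colGs n r j :=
  Nat.succ_le_succ (Nat.zero_le _)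

lemma colGs_le (n r j : ℕ) (hn : 1 ≤ n) : colGs n r j ≤ n := by
  unfold colGs
  exact Nat.succ_le_of_lt (Nat.mod_lt _ (by omega))

lemma colGs_step (n r : ℕ) (hn : 2 ≤ n) (j : ℕ) :
    colGs n r (j + 1) = if colGs n r j = 1 then n else colGs n r j - 1 := by
  obtain ⟨m, rfl⟩ : ∃ m, n = m + 2 := ⟨n - 2, by omega⟩
  unfold colGs
  have h1 : r + (m + 2 - 1) * (j + 1) = (r + (m + 2 - 1) * j) + (m + 1) := by
    simp only [show m + 2 - 1 = m + 1 from rfl]; ring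
  rw [h1]
  set x := r + (m + 2 - 1) * j with hx
  have hlt : x % (m + 2) < m + 2 := Nat.mod_lt _ (by omega)
  rcases Nat.eq_zero_or_pos (x % (m + 2)) with h0 | h0
  · have hmod : (x + (m + 1)) % (m + 2) = m + 1 := by
      rw [Nat.add_mod, h0, Nat.zero_add, Nat.mod_eq_of_lt (show m + 1 < m + 2 by omega),
        Nat.mod_eq_of_lt (show m + 1 < m + 2 by omega)]
    rw [hmod, h0]
    simp
  · have hmod : (x + (m + 1)) % (m + 2) = x % (m + 2) - 1 := by
      rw [Nat.add_mod, Nat.mod_eq_of_lt (show m + 1 < m + 2 by omega)]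
      generalize hg : x % (m + 2) = y at h0 hlt ⊢
      have e : y + (m + 1) = (m + 2) + (y - 1) := by omega
      rw [e, Nat.add_mod_left, Nat.mod_eq_of_lt (by omega)]
    rw [hmod]
    have hne : ¬ (x % (m + 2) + 1 = 1) := by omega
    rw [if_neg hne]
    generalize hg : x % (m + 2) = y at h0 ⊢
    omega

lemma colGs_last (n r L : ℕ) (hn : 1 ≤ n) (hL : L % n = r) : colGs n r L = 1 := by
  obtain ⟨m, rfl⟩ : ∃ m, n = m + 1 := ⟨n - 1, by omega⟩
  have hd := Nat.div_add_mod L (m + 1)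
  rw [hL] at hd
  obtain ⟨q, hq⟩ : ∃ q, L = (m + 1) * q + r := ⟨L / (m + 1), hd.symm⟩
  subst hq
  unfold colGs
  have h1 : r + (m + 1 - 1) * ((m + 1) * q + r) = (m + 1) * (m * q + r) := by
    simp only [Nat.add_sub_cancel]; ring
  rw [h1, Nat.mul_mod_right]

lemma colGs_period (n r j t : ℕ) : colGs n r (j + t * n) = colGs n r j := by
  unfold colGs
  have h : r + (n - 1) * (j + t * n) = (r + (n - 1) * j) + ((n - 1) * t) * n := by ring
  rw [h, Nat.add_mul_mod_self_right]

lemma colGs_top (n r : ℕ) (hn : 2 ≤ n) : colGs n r (r + 1) = n := by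
  obtain ⟨m, rfl⟩ : ∃ m, n = m + 1 := ⟨n - 1, by omega⟩
  unfold colGs
  have h1 : r + (m + 1 - 1) * (r + 1) = (m + 1) * r + m := by
    simp only [Nat.add_sub_cancel]; ring
  rw [h1, Nat.mul_add_mod, Nat.mod_eq_of_lt (by omega)]

lemma chain (n : ℕ) (b : ℕ → ℕ) (a c : ℕ) (hac : a ≤ c)
    (hb : ∀ j, a ≤ j → j ≤ c → 1 ≤ b j ∧ b j ≤ n) :
    (c - a) + b c ≤ n * segA b a c + b a := by
  obtain ⟨t, rfl⟩ := Nat.exists_eq_add_of_le hac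
  clear hac
  revert hb
  induction t with
  | zero => intro _; simp [segA]
  | succ t ih =>
    intro hb
    have IH := ih (fun j h1 h2 => hb j h1 (by omega))
    have hidx : a + (t + 1) = (a + t) + 1 := rfl
    rw [hidx]
    have hsum : segA b a ((a + t) + 1) = segA b a (a + t) + chi b (a + t) := by
      unfold segA
      rw [Finset.sum_Ico_succ_top (by omega : a ≤ a + t)]
    have hb1 := hb (a + t) (by omega) (by omega)
    have hb2 := hb (a + t + 1) (by omega) (by omega)
    rcases le_or_gt (b (a + t)) (b (a + t + 1)) with hle | hlt
    · have hchi : chi b (a + t) = 1 := if_pos hle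
      rw [hchi] at hsum
      have hmul : n * segA b a ((a + t) + 1) = n * segA b a (a + t) + n := by
        rw [hsum, Nat.mul_add, Nat.mul_one]
      rw [hmul]
      generalize hP : n * segA b a (a + t) = P at IH ⊢
      omega
    · have hchi : chi b (a + t) = 0 := if_neg (by omega)
      rw [hchi] at hsum
      have hmul : n * segA b a ((a + t) + 1) = n * segA b a (a + t) := by
        rw [hsum, Nat.add_zero]
      rw [hmul]
      generalize hP : n * segA b a (a + t) = P at IH ⊢
      omega

lemma seg_ge (n : ℕ) (b : ℕ → ℕ) (a c k : ℕ) (hn : 1 ≤ n) (hac : a ≤ c)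
    (hb : ∀ j, a ≤ j → j ≤ c → 1 ≤ b j ∧ b j ≤ n)
    (h : n * k + b a ≤ (c - a) + b c + (n - 1)) : k ≤ segA b a c := by
  have hc := chain n b a c hac hb
  rcases Nat.lt_or_ge (segA b a c) k with hlt | hge
  · exfalso
    have h2 : n * (segA b a c + 1) ≤ n * k := Nat.mul_le_mul_left n (by omega)
    have h3 : n * (segA b a c + 1) = n * segA b a c + n := by ring
    rw [h3] at h2
    generalize hP : n * segA b a c = P at hc h2
    generalize hQ : n * k = Q at h h2
    omega
  · exact hge

lemma gs_chain (n r : ℕ) (hn : 2 ≤ n) (a c : ℕ) (hac : a ≤ c) :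
    n * segA (colGs n r) a c + (a + colGs n r a) = c + colGs n r c := by
  obtain ⟨t, rfl⟩ := Nat.exists_eq_add_of_le hac
  clear hac
  induction t with
  | zero => simp [segA]
  | succ t ih =>
    have hidx : a + (t + 1) = (a + t) + 1 := rfl
    rw [hidx]
    have hsum : segA (colGs n r) a ((a + t) + 1)
        = segA (colGs n r) a (a + t) + chi (colGs n r) (a + t) := by
      unfold segA
      rw [Finset.sum_Ico_succ_top (by omega : a ≤ a + t)]
    have hstep := colGs_step n r hn (a + t)
    have hpos := colGs_pos n r (a + t)
    by_cases h1 : colGs n r (a + t) = 1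
    · rw [if_pos h1] at hstep
      have hchi : chi (colGs n r) (a + t) = 1 := by
        unfold chi
        rw [hstep, h1]
        exact if_pos (by omega)
      rw [hchi] at hsum
      rw [hsum, Nat.mul_add, Nat.mul_one, hstep]
      generalize hP : n * segA (colGs n r) a (a + t) = P at ih ⊢
      omega
    · rw [if_neg h1] at hstep
      have h2 : 2 ≤ colGs n r (a + t) := by omega
      have hchi : chi (colGs n r) (a + t) = 0 := by
        unfold chi
        rw [hstep]
        exact if_neg (by omega)
      rw [hchi] at hsum
      rw [hsum, Nat.add_zero, hstep]
      generalize hP : n * segA (colGs n r) a (a + t) = P at ih ⊢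
      omega

lemma gain_zero (n r L : ℕ) (b : ℕ → ℕ) (hn : 2 ≤ n) (hL : L % n = r)
    (hb : ∀ j, 1 ≤ j → j ≤ L → 1 ≤ b j ∧ b j ≤ n)
    (i : ℕ) (hi : 1 ≤ i) (hiL : i ≤ L) :
    segA (colGs n r) i L ≤ segA b i L := by
  refine seg_ge n b i L _ (by omega) hiL (fun j h1 h2 => hb j (le_trans hi h1) h2) ?_
  have g := gs_chain n r hn i L hiL
  rw [colGs_last n r L (by omega) hL] at g
  have hbi := hb i hi hiL
  have hbL := hb L (by omega) le_rfl
  have hgi := colGs_pos n r i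
  generalize hP : n * segA (colGs n r) i L = P at g ⊢
  omega

lemma gain_one (n r L : ℕ) (b : ℕ → ℕ) (hn : 2 ≤ n) (hL : L % n = r)
    (hb : ∀ j, 1 ≤ j → j ≤ L → 1 ≤ b j ∧ b j ≤ n)
    (i d : ℕ) (hi : 1 ≤ i) (hid : i ≤ d) (hdL : d ≤ L)
    (hcase : (colGs n r d < b d ∧ b i ≤ colGs n r i) ∨
             (b d < colGs n r d ∧ b i + colGs n r d ≤ colGs n r i + b d + (n - 1))) :
    segA (colGs n r) i L + 1 ≤ segA b i L := by
  have hbi := hb i hi (le_trans hid hdL)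
  have hbd := hb d (le_trans hi hid) hdL
  have hbL := hb L (by omega) le_rfl
  have hgi := colGs_pos n r i
  have hgd := colGs_pos n r d
  have hgdu := colGs_le n r d (by omega)
  have g1 := gs_chain n r hn i d hid
  have g2 := gs_chain n r hn d L hdL
  rw [colGs_last n r L (by omega) hL] at g2
  have hsb : segA b i L = segA b i d + segA b d L := segA_split b hid hdL
  have hsg : segA (colGs n r) i L
      = segA (colGs n r) i d + segA (colGs n r) d L := segA_split _ hid hdL
  have hbrest : ∀ j, d ≤ j → j ≤ L → 1 ≤ b j ∧ b j ≤ n :=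
    fun j h1 h2 => hb j (by omega) h2
  have hbseg : ∀ j, i ≤ j → j ≤ d → 1 ≤ b j ∧ b j ≤ n :=
    fun j h1 h2 => hb j (by omega) (by omega)
  rcases hcase with ⟨hup, hcond⟩ | ⟨hdown, hcond⟩
  · have hA1 : segA (colGs n r) i d + 1 ≤ segA b i d := by
      refine seg_ge n b i d _ (by omega) hid hbseg ?_
      have e : n * (segA (colGs n r) i d + 1) = n * segA (colGs n r) i d + n := by ring
      rw [e]
      generalize hP : n * segA (colGs n r) i d = P at g1 ⊢
      omega
    have hA2 : segA (colGs n r) d L ≤ segA b d L :=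
      gain_zero n r L b hn hL hb d (by omega) hdL
    omega
  · have hA1 : segA (colGs n r) i d ≤ segA b i d := by
      refine seg_ge n b i d _ (by omega) hid hbseg ?_
      generalize hP : n * segA (colGs n r) i d = P at g1 ⊢
      omega
    have hA2 : segA (colGs n r) d L + 1 ≤ segA b d L := by
      refine seg_ge n b d L _ (by omega) hdL hbrest ?_
      have e : n * (segA (colGs n r) d L + 1) = n * segA (colGs n r) d L + n := by ring
      rw [e]
      generalize hP : n * segA (colGs n r) d L = P at g2 ⊢
      omega
    omega

lemma energy_eq (L : ℕ) (f : ℕ → ℕ) :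
    colEnergy L f = ∑ i ∈ Finset.Ico 1 L, segA f i L := by
  rcases Nat.eq_zero_or_pos L with h | h
  · subst h; simp [colEnergy, segA]
  have hIcc : Finset.Icc 1 (L - 1) = Finset.Ico 1 L := by
    rw [← Finset.Ico_add_one_right_eq_Icc]
    congr 1
    omega
  show (∑ j ∈ Finset.Icc 1 (L - 1), j * chi f j) = _
  rw [hIcc]
  calc ∑ j ∈ Finset.Ico 1 L, j * chi f j
      = ∑ j ∈ Finset.Ico 1 L, ∑ i ∈ Finset.Ico 1 L, (if i ≤ j then chi f j else 0) := by
        refine Finset.sum_congr rfl fun j hj => ?_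
        rw [← Finset.sum_filter]
        have hfil : (Finset.Ico 1 L).filter (fun i => i ≤ j) = Finset.Icc 1 j := by
          ext x
          simp only [Finset.mem_filter, Finset.mem_Ico, Finset.mem_Icc]
          simp only [Finset.mem_Ico] at hj
          omega
        rw [hfil, Finset.sum_const, Nat.card_Icc, smul_eq_mul]
        congr 1
    _ = ∑ i ∈ Finset.Ico 1 L, ∑ j ∈ Finset.Ico 1 L, (if i ≤ j then chi f j else 0) :=
        Finset.sum_comm
    _ = ∑ i ∈ Finset.Ico 1 L, segA f i L := by
        refine Finset.sum_congr rfl fun i hi => ?_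
        rw [← Finset.sum_filter]
        have hfil : (Finset.Ico 1 L).filter (fun j => i ≤ j) = Finset.Ico i L := by
          ext x
          simp only [Finset.mem_filter, Finset.mem_Ico]
          simp only [Finset.mem_Ico] at hi
          omega
        rw [hfil]
        rfl

/-- **Divergence of the energy away from the ground state (single columns).**
Fix `n ≥ 2` and `0 ≤ r < n`. For every `C` there is `N` such that for every
`L ≡ r (mod n)` and every single-column path `b` of length `L` differing from the ground
state path at some position `j > N`, one has `E(b) - E(b̄) > C`. -/
theorem column_energy_divergence (n r : ℕ) (hn : 2 ≤ n) (hr : r < n) :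
    ∀ C : ℕ, ∃ N : ℕ, ∀ L : ℕ, L % n = r → ∀ b : ℕ → ℕ,
      (∀ j, 1 ≤ j → j ≤ L → 1 ≤ b j ∧ b j ≤ n) →
      (∃ j, N < j ∧ j ≤ L ∧ b j ≠ colGs n r j) →
      (colEnergy L (colGs n r) : ℤ) + C < colEnergy L b := by
  intro C
  refine ⟨n * (C + 2) + C + 2, ?_⟩
  rintro L hL b hb ⟨d0, hNd0, hd0L, hne⟩
  have hM2 : 2 * (C + 2) ≤ n * (C + 2) := Nat.mul_le_mul_right _ hn
  have hL1 : 1 ≤ L := by omega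
  have up : ∀ d, n * (C + 2) ≤ d → d ≤ L → colGs n r d < b d →
      ∃ T : Finset ℕ, C + 1 ≤ T.card ∧ T ⊆ Finset.Ico 1 L ∧
        ∀ i ∈ T, segA (colGs n r) i L + 1 ≤ segA b i L := by
    intro d hMd hdL2 hupd
    refine ⟨(Finset.range (C + 1)).image (fun t => (r + 1) + t * n), ?_, ?_, ?_⟩
    · rw [Finset.card_image_of_injective]
      · simp
      · intro x y hxy
        simp only at hxy
        have hx : x * n = y * n := by omega
        exact Nat.eq_of_mul_eq_mul_right (by omega) hx
    · intro i hi
      simp only [Finset.mem_image, Finset.mem_range] at hi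
      obtain ⟨t, ht, rfl⟩ := hi
      have htn : t * n ≤ C * n := Nat.mul_le_mul_right n (by omega)
      have he : C * n + n + n = n * (C + 2) := by ring
      simp only [Finset.mem_Ico]
      omega
    · intro i hi
      simp only [Finset.mem_image, Finset.mem_range] at hi
      obtain ⟨t, ht, rfl⟩ := hi
      have htn : t * n ≤ C * n := Nat.mul_le_mul_right n (by omega)
      have he : C * n + n + n = n * (C + 2) := by ring
      have hgstop : colGs n r (r + 1 + t * n) = n := by
        rw [colGs_period, colGs_top n r hn]
      refine gain_one n r L b hn hL hb _ d (by omega) (by omega) hdL2 (Or.inl ⟨hupd, ?_⟩)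
      rw [hgstop]
      exact (hb _ (by omega) (by omega)).2
  obtain ⟨T, hTcard, hTsub, hTgain⟩ :
      ∃ T : Finset ℕ, C + 1 ≤ T.card ∧ T ⊆ Finset.Ico 1 L ∧
        ∀ i ∈ T, segA (colGs n r) i L + 1 ≤ segA b i L := by
    have hbd0 := hb d0 (by omega) hd0L
    have hgd0 := colGs_pos n r d0
    have hgd0u := colGs_le n r d0 (by omega)
    rcases Nat.lt_trichotomy (b d0) (colGs n r d0) with hlt | heq | hgt
    · by_cases hall : ∀ i ∈ Finset.Ico (n * (C + 2)) d0,
          b i + colGs n r d0 ≤ colGs n r i + b d0 + (n - 1)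
      · refine ⟨Finset.Ico (n * (C + 2)) d0, ?_, ?_, ?_⟩
        · rw [Nat.card_Ico]; omega
        · intro i hi
          simp only [Finset.mem_Ico] at hi ⊢
          omega
        · intro i hi
          have hi' := hi
          simp only [Finset.mem_Ico] at hi'
          exact gain_one n r L b hn hL hb i d0 (by omega) (by omega) hd0L
            (Or.inr ⟨hlt, hall i hi⟩)
      · push_neg at hall
        obtain ⟨i0, hi0mem, hi0⟩ := hall
        simp only [Finset.mem_Ico] at hi0mem
        have hgi0u := colGs_le n r i0 (by omega)
        have hup0 : colGs n r i0 < b i0 := by omega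
        exact up i0 hi0mem.1 (by omega) hup0
    · exact absurd heq hne
    · exact up d0 (by omega) hd0L hgt
  have key : ∀ i ∈ Finset.Ico 1 L,
      segA (colGs n r) i L + (if i ∈ T then 1 else 0) ≤ segA b i L := by
    intro i hi
    simp only [Finset.mem_Ico] at hi
    by_cases hT : i ∈ T
    · rw [if_pos hT]
      exact hTgain i hT
    · rw [if_neg hT]
      have := gain_zero n r L b hn hL hb i hi.1 (by omega)
      omega
  have hsum := Finset.sum_le_sum key
  rw [Finset.sum_add_distrib] at hsum
  have hite : (∑ i ∈ Finset.Ico 1 L, (if i ∈ T then (1 : ℕ) else 0)) = T.card := by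
    rw [Finset.sum_ite_mem, Finset.inter_eq_right.mpr hTsub]
    simp
  rw [hite] at hsum
  have hfin : colEnergy L (colGs n r) + (C + 1) ≤ colEnergy L b := by
    rw [energy_eq L (colGs n r), energy_eq L b]
    omega
  omega

end HKKOTY
end
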